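/- With the notation of rank-sparsity incoherence, for every ρ > 0, and every matrix M ∈ ℝ^{m×n}, ‖P_Ω(P_T(M))‖_{ℓ1} ≤ α(ρ)β(ρ)‖M‖_{ℓ1}, where ‖·‖_{ℓ1} denotes the entry-wise 1-norm (sum of absolute values of entries). -/

import Mathlib

open scoped BigOperators
open Matrix
noncomputable section

namespace SLR

/-- Trace inner product `⟨A,B⟩ = tr(AᵀB)`. -/
def inner' {m n : ℕ} (A B : Matrix (Fin m) (Fin n) ℝ) : ℝ := ∑ i, ∑ j, A i j * B i j

/-- Entrywise 1-norm. -/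
def l1 {m n : ℕ} (M : Matrix (Fin m) (Fin n) ℝ) : ℝ := ∑ i, ∑ j, |M i j|

/-- Entrywise ∞-norm (maximum absolute value of an entry). -/
def linf {m n : ℕ} (M : Matrix (Fin m) (Fin n) ℝ) : ℝ := ⨆ i, ⨆ j, |M i j|

/-- Frobenius norm. -/
def frob {m n : ℕ} (M : Matrix (Fin m) (Fin n) ℝ) : ℝ :=
  Real.sqrt (∑ i, ∑ j, (M i j) ^ 2)

/-- `‖M‖_{1→1}`: maximum column absolute sum. -/
def n11 {m n : ℕ} (M : Matrix (Fin m) (Fin n) ℝ) : ℝ := ⨆ j, ∑ i, |M i j|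

/-- `‖M‖_{∞→∞}`: maximum row absolute sum. -/
def nII {m n : ℕ} (M : Matrix (Fin m) (Fin n) ℝ) : ℝ := ⨆ i, ∑ j, |M i j|

/-- Spectral norm `‖M‖_{2→2}`. -/
def spec {m n : ℕ} (M : Matrix (Fin m) (Fin n) ℝ) : ℝ :=
  ‖LinearMap.toContinuousLinearMap (Matrix.toEuclideanLin M)‖

/-- Trace (nuclear) norm: sum of singular values. -/
def traceNorm {m n : ℕ} (M : Matrix (Fin m) (Fin n) ℝ) : ℝ :=
  ∑ i, Real.sqrt ((show (Mᵀ * M).IsHermitian by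
    simpa [Matrix.conjTranspose_eq_transpose_of_trivial] using
      Matrix.isHermitian_conjTranspose_mul_self M).eigenvalues i)

/-- The hybrid norm `‖M‖_{♯(ρ)} = max{ρ‖M‖_{1→1}, ρ⁻¹‖M‖_{∞→∞}}`. -/
def sharp {m n : ℕ} (ρ : ℝ) (M : Matrix (Fin m) (Fin n) ℝ) : ℝ :=
  max (ρ * n11 M) (ρ⁻¹ * nII M)

/-- The dual norm `‖·‖_{♭(ρ)}` of `‖·‖_{♯(ρ)}`. -/
def flat {m n : ℕ} (ρ : ℝ) (M : Matrix (Fin m) (Fin n) ℝ) : ℝ :=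
  sSup {x : ℝ | ∃ N : Matrix (Fin m) (Fin n) ℝ, sharp ρ N ≤ 1 ∧ x = inner' M N}

/-- Induced operator norm of a map `T` with respect to the norm `f`. -/
def opNormWrt {m n : ℕ} (f : Matrix (Fin m) (Fin n) ℝ → ℝ)
    (T : Matrix (Fin m) (Fin n) ℝ → Matrix (Fin m) (Fin n) ℝ) : ℝ :=
  sSup {x : ℝ | ∃ M, f M ≤ 1 ∧ x = f (T M)}

/-- Entrywise sign matrix. -/
def signM {m n : ℕ} (M : Matrix (Fin m) (Fin n) ℝ) : Matrix (Fin m) (Fin n) ℝ :=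
  Matrix.of fun i j => Real.sign (M i j)

/-- Orthogonal projection onto matrices supported on `supp X`. -/
def POmega {m n : ℕ} (X : Matrix (Fin m) (Fin n) ℝ) (M : Matrix (Fin m) (Fin n) ℝ) :
    Matrix (Fin m) (Fin n) ℝ :=
  Matrix.of fun i j => if X i j ≠ 0 then M i j else 0

/-- Orthogonal projection onto the tangent space `T` determined by `U`, `V`. -/
def PT {m n r : ℕ} (U : Matrix (Fin m) (Fin r) ℝ) (V : Matrix (Fin n) (Fin r) ℝ)
    (M : Matrix (Fin m) (Fin n) ℝ) : Matrix (Fin m) (Fin n) ℝ :=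
  U * Uᵀ * M + M * (V * Vᵀ) - U * Uᵀ * M * (V * Vᵀ)

/-- `‖U‖_{2→∞}`: maximum row Euclidean norm. -/
def two2inf {m r : ℕ} (U : Matrix (Fin m) (Fin r) ℝ) : ℝ :=
  ⨆ i, Real.sqrt (∑ k, (U i k) ^ 2)

/-- The sparsity measure `α(ρ)` of `X̄_S`. -/
def alpha {m n : ℕ} (X : Matrix (Fin m) (Fin n) ℝ) (ρ : ℝ) : ℝ :=
  max (ρ * n11 (signM X)) (ρ⁻¹ * nII (signM X))

/-- The incoherence measure `β(ρ)` of the singular vectors `U`, `V`. -/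
def beta {m n r : ℕ} (U : Matrix (Fin m) (Fin r) ℝ) (V : Matrix (Fin n) (Fin r) ℝ)
    (ρ : ℝ) : ℝ :=
  ρ⁻¹ * linf (U * Uᵀ) + ρ * linf (V * Vᵀ) + two2inf U * two2inf V

/-- Number of nonzero entries. -/
def suppCard {m n : ℕ} (X : Matrix (Fin m) (Fin n) ℝ) : ℕ :=
  (Finset.univ.filter fun p : Fin m × Fin n => X p.1 p.2 ≠ 0).card

/-! With `A = ŪŪᵀ`, `B = V̄V̄ᵀ` and `S = sign X̄_S`, one has `‖P_Ω N‖_{ℓ1} = ∑ |S_ij| |N_ij|` and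
`P_T M = AM + MB - AMB`, so it suffices to bound the `|S|`-weighted ℓ1 mass of the three terms.
For `AM` and `MB` this follows entrywise from `‖A‖_∞`, `‖B‖_∞` and the column and row sums of `|S|`.
For `AMB`, the coefficient of `|M_kl|` is the bilinear form of `|S|` on the `k`-th column of `A` and
the `l`-th row of `B`, which Schur's test bounds by `√(‖S‖_{1→1} ‖S‖_{∞→∞})` times their Euclidean
norms; as `ŪᵀŪ = 1`, the rows of `ŪŪᵀ` have the same norms as those of `Ū`. Splitting each product
of weights as `(ρ⁻¹ ·) (ρ ·)` then yields the factor `α(ρ) β(ρ)`. -/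

def weightedL1 {m n : ℕ} (S N : Matrix (Fin m) (Fin n) ℝ) : ℝ := ∑ i, ∑ j, |S i j| * |N i j|

section Norms

variable {m n : ℕ}

lemma l1_nonneg (M : Matrix (Fin m) (Fin n) ℝ) : 0 ≤ l1 M := by
  unfold l1; positivity

lemma l1_transpose (M : Matrix (Fin m) (Fin n) ℝ) : l1 Mᵀ = l1 M :=
  Finset.sum_comm

lemma n11_transpose (S : Matrix (Fin m) (Fin n) ℝ) : n11 Sᵀ = nII S := rfl

lemma n11_nonneg (S : Matrix (Fin m) (Fin n) ℝ) : 0 ≤ n11 S :=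
  Real.iSup_nonneg fun _ => by positivity

lemma nII_nonneg (S : Matrix (Fin m) (Fin n) ℝ) : 0 ≤ nII S :=
  Real.iSup_nonneg fun _ => by positivity

lemma sum_abs_le_nII (S : Matrix (Fin m) (Fin n) ℝ) (i : Fin m) : ∑ j, |S i j| ≤ nII S :=
  le_ciSup (f := fun i => ∑ j, |S i j|) (Set.finite_range _).bddAbove i

lemma sum_abs_le_n11 (S : Matrix (Fin m) (Fin n) ℝ) (j : Fin n) : ∑ i, |S i j| ≤ n11 S :=
  sum_abs_le_nII Sᵀ j

lemma abs_le_linf (A : Matrix (Fin m) (Fin n) ℝ) (i : Fin m) (j : Fin n) : |A i j| ≤ linf A :=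
  (le_ciSup (f := fun j => |A i j|) (Set.finite_range _).bddAbove j).trans
    (le_ciSup (f := fun i => ⨆ j, |A i j|) (Set.finite_range _).bddAbove i)

lemma linf_nonneg (A : Matrix (Fin m) (Fin n) ℝ) : 0 ≤ linf A :=
  Real.iSup_nonneg fun _ => Real.iSup_nonneg fun _ => abs_nonneg _

lemma sqrt_sum_sq_le_two2inf (U : Matrix (Fin m) (Fin n) ℝ) (i : Fin m) :
    √(∑ k, U i k ^ 2) ≤ two2inf U :=
  le_ciSup (f := fun i => √(∑ k, U i k ^ 2)) (Set.finite_range _).bddAbove i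

lemma two2inf_nonneg (U : Matrix (Fin m) (Fin n) ℝ) : 0 ≤ two2inf U :=
  Real.iSup_nonneg fun _ => Real.sqrt_nonneg _

lemma sum_sq_mul_transpose_self_apply {U : Matrix (Fin m) (Fin n) ℝ} (hU : Uᵀ * U = 1)
    (i : Fin m) : ∑ k, (U * Uᵀ) i k ^ 2 = ∑ t, U i t ^ 2 := by
  have hidem : U * Uᵀ * (U * Uᵀ) = U * Uᵀ := by
    rw [Matrix.mul_assoc, ← Matrix.mul_assoc Uᵀ, hU, Matrix.one_mul]
  calc ∑ k, (U * Uᵀ) i k ^ 2 = (U * Uᵀ * (U * Uᵀ)) i i := by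
        simp only [Matrix.mul_apply (M := U * Uᵀ), sq]
        congr! 2 with k
        simp only [Matrix.mul_apply, Matrix.transpose_apply, mul_comm]
    _ = (U * Uᵀ) i i := by rw [hidem]
    _ = ∑ t, U i t ^ 2 := by simp [Matrix.mul_apply, sq]

lemma two2inf_mul_transpose_self {U : Matrix (Fin m) (Fin n) ℝ} (hU : Uᵀ * U = 1) :
    two2inf (U * Uᵀ) = two2inf U := by
  simp only [two2inf, sum_sq_mul_transpose_self_apply hU]

end Norms

section WeightedL1

variable {m n p q : ℕ}

lemma l1_POmega (X N : Matrix (Fin m) (Fin n) ℝ) : l1 (POmega X N) = weightedL1 (signM X) N := by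
  refine Finset.sum_congr rfl fun i _ => Finset.sum_congr rfl fun j _ => ?_
  by_cases h : X i j = 0
  · simp [POmega, signM, h]
  · rcases Real.sign_apply_eq_of_ne_zero _ h with hs | hs <;> simp [POmega, signM, h, hs]

lemma weightedL1_transpose (S N : Matrix (Fin m) (Fin n) ℝ) :
    weightedL1 Sᵀ Nᵀ = weightedL1 S N :=
  Finset.sum_comm

lemma weightedL1_add_le (S N N' : Matrix (Fin m) (Fin n) ℝ) :
    weightedL1 S (N + N') ≤ weightedL1 S N + weightedL1 S N' := by
  simp only [weightedL1, ← Finset.sum_add_distrib, ← mul_add]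
  gcongr with i _ j _
  exact abs_add_le _ _

lemma weightedL1_sub_le (S N N' : Matrix (Fin m) (Fin n) ℝ) :
    weightedL1 S (N - N') ≤ weightedL1 S N + weightedL1 S N' := by
  simp only [weightedL1, ← Finset.sum_add_distrib, ← mul_add]
  gcongr with i _ j _
  exact abs_sub _ _

lemma weightedL1_PT_le (S : Matrix (Fin m) (Fin n) ℝ) (U : Matrix (Fin m) (Fin p) ℝ)
    (V : Matrix (Fin n) (Fin p) ℝ) (M : Matrix (Fin m) (Fin n) ℝ) :
    weightedL1 S (PT U V M) ≤ weightedL1 S (U * Uᵀ * M) + weightedL1 S (M * (V * Vᵀ)) +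
      weightedL1 S (U * Uᵀ * M * (V * Vᵀ)) :=
  (weightedL1_sub_le _ _ _).trans (add_le_add_left (weightedL1_add_le _ _ _) _)

lemma weightedL1_mul_le_left (S : Matrix (Fin m) (Fin n) ℝ) {A : Matrix (Fin m) (Fin p) ℝ}
    (M : Matrix (Fin p) (Fin n) ℝ) {c : ℝ} (hc : 0 ≤ c) (hA : ∀ i k, |A i k| ≤ c) :
    weightedL1 S (A * M) ≤ c * n11 S * l1 M := by
  have hentry : ∀ i j, |(A * M) i j| ≤ c * ∑ k, |M k j| := fun i j => calc
    |(A * M) i j| ≤ ∑ k, |A i k| * |M k j| := by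
        simpa only [Matrix.mul_apply, abs_mul] using
          Finset.abs_sum_le_sum_abs (fun k => A i k * M k j) Finset.univ
    _ ≤ ∑ k, c * |M k j| := by gcongr with k; exact hA i k
    _ = c * ∑ k, |M k j| := (Finset.mul_sum _ _ _).symm
  calc weightedL1 S (A * M) ≤ ∑ i, ∑ j, |S i j| * (c * ∑ k, |M k j|) := by
        unfold weightedL1; gcongr with i _ j _; exact hentry i j
    _ = ∑ j, (∑ i, |S i j|) * (c * ∑ k, |M k j|) := by
        rw [Finset.sum_comm]; simp only [Finset.sum_mul]
    _ ≤ ∑ j, n11 S * (c * ∑ k, |M k j|) := by gcongr with j; exact sum_abs_le_n11 S j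
    _ = c * n11 S * l1 M := by
        rw [← l1_transpose M, l1, Finset.mul_sum]
        exact Finset.sum_congr rfl fun j _ => by simp only [Matrix.transpose_apply]; ring

lemma weightedL1_mul_le_right (S : Matrix (Fin m) (Fin n) ℝ) {B : Matrix (Fin p) (Fin n) ℝ}
    (M : Matrix (Fin m) (Fin p) ℝ) {c : ℝ} (hc : 0 ≤ c) (hB : ∀ l j, |B l j| ≤ c) :
    weightedL1 S (M * B) ≤ c * nII S * l1 M := by
  rw [← weightedL1_transpose, Matrix.transpose_mul, ← n11_transpose, ← l1_transpose M]
  exact weightedL1_mul_le_left Sᵀ Mᵀ hc fun j l => hB l j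

lemma sum_sum_abs_mul_sq_le_nII (S : Matrix (Fin m) (Fin n) ℝ) (x : Fin m → ℝ) :
    ∑ i, ∑ j, |S i j| * x i ^ 2 ≤ nII S * ∑ i, x i ^ 2 := calc
  ∑ i, ∑ j, |S i j| * x i ^ 2 = ∑ i, (∑ j, |S i j|) * x i ^ 2 := by simp only [Finset.sum_mul]
  _ ≤ ∑ i, nII S * x i ^ 2 := by gcongr with i; exact sum_abs_le_nII S i
  _ = nII S * ∑ i, x i ^ 2 := (Finset.mul_sum _ _ _).symm

lemma sum_sum_abs_mul_sq_le_n11 (S : Matrix (Fin m) (Fin n) ℝ) (y : Fin n → ℝ) :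
    ∑ i, ∑ j, |S i j| * y j ^ 2 ≤ n11 S * ∑ j, y j ^ 2 := by
  rw [Finset.sum_comm]
  exact sum_sum_abs_mul_sq_le_nII Sᵀ y

lemma sum_sum_abs_mul_abs_mul_abs_le (S : Matrix (Fin m) (Fin n) ℝ) (x : Fin m → ℝ)
    (y : Fin n → ℝ) :
    ∑ i, ∑ j, |S i j| * |x i| * |y j| ≤
      √(nII S * ∑ i, x i ^ 2) * √(n11 S * ∑ j, y j ^ 2) := by
  have hCS := Finset.sum_sq_le_sum_mul_sum_of_sq_le_mul (Finset.univ : Finset (Fin m × Fin n))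
    (r := fun ij => |S ij.1 ij.2| * |x ij.1| * |y ij.2|)
    (f := fun ij => |S ij.1 ij.2| * x ij.1 ^ 2) (g := fun ij => |S ij.1 ij.2| * y ij.2 ^ 2)
    (fun _ _ => by positivity) (fun _ _ => by positivity)
    (fun ij _ => le_of_eq (by rw [mul_pow, mul_pow, sq_abs (x _), sq_abs (y _)]; ring))
  simp only [Fintype.sum_prod_type] at hCS
  rw [← Real.sqrt_mul (mul_nonneg (nII_nonneg S) (by positivity))]
  refine (le_abs_self _).trans (Real.abs_le_sqrt (hCS.trans ?_))
  exact mul_le_mul (sum_sum_abs_mul_sq_le_nII S x) (sum_sum_abs_mul_sq_le_n11 S y)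
    (by positivity) (mul_nonneg (nII_nonneg S) (by positivity))

lemma abs_mul_mul_apply_le (A : Matrix (Fin m) (Fin p) ℝ) (M : Matrix (Fin p) (Fin q) ℝ)
    (B : Matrix (Fin q) (Fin n) ℝ) (i : Fin m) (j : Fin n) :
    |(A * M * B) i j| ≤ ∑ k, ∑ l, |A i k| * |M k l| * |B l j| := calc
  |(A * M * B) i j| ≤ ∑ l, |(A * M) i l| * |B l j| := by
      simpa only [Matrix.mul_apply (M := A * M), abs_mul] using
        Finset.abs_sum_le_sum_abs (fun l => (A * M) i l * B l j) Finset.univ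
  _ ≤ ∑ l, (∑ k, |A i k| * |M k l|) * |B l j| := by
      gcongr with l
      simpa only [Matrix.mul_apply, abs_mul] using
        Finset.abs_sum_le_sum_abs (fun k => A i k * M k l) Finset.univ
  _ = ∑ k, ∑ l, |A i k| * |M k l| * |B l j| := by
      simp only [Finset.sum_mul]
      exact Finset.sum_comm

lemma weightedL1_mul_mul_le (S : Matrix (Fin m) (Fin n) ℝ) (A : Matrix (Fin m) (Fin p) ℝ)
    (M : Matrix (Fin p) (Fin q) ℝ) (B : Matrix (Fin q) (Fin n) ℝ) :
    weightedL1 S (A * M * B) ≤ √(n11 S) * √(nII S) * (two2inf Aᵀ * two2inf B) * l1 M := by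
  set C := √(n11 S) * √(nII S) * (two2inf Aᵀ * two2inf B)
  have hschur : ∀ k l, ∑ i, ∑ j, |S i j| * |A i k| * |B l j| ≤ C := fun k l => by
    refine (sum_sum_abs_mul_abs_mul_abs_le S (fun i => A i k) (fun j => B l j)).trans ?_
    rw [Real.sqrt_mul (nII_nonneg S), Real.sqrt_mul (n11_nonneg S)]
    calc √(nII S) * √(∑ i, A i k ^ 2) * (√(n11 S) * √(∑ j, B l j ^ 2))
        ≤ √(nII S) * two2inf Aᵀ * (√(n11 S) * two2inf B) := by
          gcongr
          · exact mul_nonneg (Real.sqrt_nonneg _) (two2inf_nonneg Aᵀ)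
          · exact sqrt_sum_sq_le_two2inf Aᵀ k
          · exact sqrt_sum_sq_le_two2inf B l
      _ = C := by ring
  calc weightedL1 S (A * M * B)
      ≤ ∑ i, ∑ j, |S i j| * ∑ k, ∑ l, |A i k| * |M k l| * |B l j| := by
        unfold weightedL1; gcongr with i _ j _; exact abs_mul_mul_apply_le A M B i j
    _ = ∑ k, ∑ l, |M k l| * ∑ i, ∑ j, |S i j| * |A i k| * |B l j| := by
        simp only [Finset.mul_sum]
        rw [Finset.sum_comm_cycle]
        refine Finset.sum_congr rfl fun k _ => ?_
        rw [Finset.sum_comm_cycle]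
        exact Finset.sum_congr rfl fun _ _ => Finset.sum_congr rfl fun _ _ =>
          Finset.sum_congr rfl fun _ _ => by ring
    _ ≤ ∑ k, ∑ l, |M k l| * C := by gcongr with k _ l _; exact hschur k l
    _ = C * l1 M := by simp only [l1, Finset.mul_sum, mul_comm]

end WeightedL1

lemma add_add_sqrt_mul_sqrt_mul_le_max_mul {ρ a b p q t : ℝ} (hρ : 0 < ρ) (ha : 0 ≤ a)
    (hb : 0 ≤ b) (hp : 0 ≤ p) (hq : 0 ≤ q) (ht : 0 ≤ t) :
    p * a + q * b + √a * √b * t ≤ max (ρ * a) (ρ⁻¹ * b) * (ρ⁻¹ * p + ρ * q + t) := by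
  set α := max (ρ * a) (ρ⁻¹ * b)
  have ha' : ρ * a ≤ α := le_max_left _ _
  have hb' : ρ⁻¹ * b ≤ α := le_max_right _ _
  have hα : 0 ≤ α := (by positivity : 0 ≤ ρ * a).trans ha'
  have hab : √a * √b ≤ α := by
    rw [← Real.sqrt_mul ha, ← Real.sqrt_mul_self hα]
    refine Real.sqrt_le_sqrt ?_
    calc a * b = ρ * a * (ρ⁻¹ * b) := by field_simp
      _ ≤ α * α := mul_le_mul ha' hb' (by positivity) hα
  calc p * a + q * b + √a * √b * t = ρ⁻¹ * p * (ρ * a) + ρ * q * (ρ⁻¹ * b) + √a * √b * t := by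
        field_simp
    _ ≤ ρ⁻¹ * p * α + ρ * q * α + α * t := by gcongr
    _ = α * (ρ⁻¹ * p + ρ * q + t) := by ring

/-- entrywise-ℓ1 contraction of `P_Ω ∘ P_T`. -/
theorem POmega_comp_PT_l1_contraction {m n r : ℕ} (Xs : Matrix (Fin m) (Fin n) ℝ)
    (U : Matrix (Fin m) (Fin r) ℝ) (V : Matrix (Fin n) (Fin r) ℝ)
    (hU : Uᵀ * U = 1) (hV : Vᵀ * V = 1) (ρ : ℝ) (hρ : 0 < ρ)
    (M : Matrix (Fin m) (Fin n) ℝ) :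
    l1 (POmega Xs (PT U V M)) ≤ alpha Xs ρ * beta U V ρ * l1 M := by
  set S := signM Xs
  have hUV : two2inf (U * Uᵀ)ᵀ * two2inf (V * Vᵀ) = two2inf U * two2inf V := by
    rw [Matrix.transpose_mul, Matrix.transpose_transpose, two2inf_mul_transpose_self hU,
      two2inf_mul_transpose_self hV]
  calc l1 (POmega Xs (PT U V M)) = weightedL1 S (PT U V M) := l1_POmega Xs _
    _ ≤ weightedL1 S (U * Uᵀ * M) + weightedL1 S (M * (V * Vᵀ)) +
          weightedL1 S (U * Uᵀ * M * (V * Vᵀ)) := weightedL1_PT_le S U V M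
    _ ≤ linf (U * Uᵀ) * n11 S * l1 M + linf (V * Vᵀ) * nII S * l1 M +
          √(n11 S) * √(nII S) * (two2inf U * two2inf V) * l1 M := by
        gcongr
        · exact weightedL1_mul_le_left S M (linf_nonneg _) (abs_le_linf _)
        · exact weightedL1_mul_le_right S M (linf_nonneg _) (abs_le_linf _)
        · exact hUV ▸ weightedL1_mul_mul_le S (U * Uᵀ) M (V * Vᵀ)
    _ = (linf (U * Uᵀ) * n11 S + linf (V * Vᵀ) * nII S +
          √(n11 S) * √(nII S) * (two2inf U * two2inf V)) * l1 M := by ring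
    _ ≤ alpha Xs ρ * beta U V ρ * l1 M := by
        gcongr ?_ * _
        · exact l1_nonneg M
        · exact add_add_sqrt_mul_sqrt_mul_le_max_mul hρ (n11_nonneg S) (nII_nonneg S)
            (linf_nonneg _) (linf_nonneg _) (mul_nonneg (two2inf_nonneg U) (two2inf_nonneg V))

end SLR
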